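/- Let $R$ be a commutative ring, $\lambda \in R$, $r \in \mathbb{N}$, and $x_1, \dots, x_r \in R$. Then $T_\lambda\Big( t^r \prod_{j=1}^r (1+x_j t)^{-1} \Big) = t^r \,(1+\lambda t)^{-1} \prod_{j=1}^r (1+(x_j+\lambda)t)^{-1}$. (This is the formal content of property (i) of tensored Segre classes: for a regular embedding $Z \subseteq Y$ of codimension $r$ with normal bundle $N_Z Y$ having Chern roots $x_1, \dots, x_r$, one has $s(Z,Y) = c(N_ZY)^{-1} \cap [Z]$ and $s(Z,Y)^{\mathscr{L}} = (c(\mathscr{L})\, c(N_Z Y \otimes \mathscr{L}))^{-1} \cap [Z]$.) -/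

import Mathlib

open PowerSeries Finset

/-- The power series `1 + λ t`. -/
noncomputable def oneAdd {R : Type*} [CommRing R] (l : R) : PowerSeries R :=
  1 + PowerSeries.C l * PowerSeries.X

/-- The inverse power series `(1 + λ t)⁻¹`, via `invOfUnit` (constant coefficient `1`). -/
noncomputable def invOneAdd {R : Type*} [CommRing R] (l : R) : PowerSeries R :=
  PowerSeries.invOfUnit (oneAdd l) 1

/-- The tensor operation `T_λ`, defined coefficientwise:
`T_λ(∑ aᵢ tⁱ) = ∑ aᵢ tⁱ (1+λt)^{-(i+1)}`; the coefficient of `t^m` is the finite sum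
`∑_{i=0}^m aᵢ · [t^{m-i}] (1+λt)^{-(i+1)}`. -/
noncomputable def T {R : Type*} [CommRing R] (l : R) (F : PowerSeries R) : PowerSeries R :=
  PowerSeries.mk fun m => ∑ i ∈ Finset.range (m + 1),
    PowerSeries.coeff i F * PowerSeries.coeff (m - i) (invOneAdd l ^ (i + 1))

/-! With `σ = t (1 + λt)⁻¹` one has `tⁱ (1 + λt)^{-(i+1)} = (1 + λt)⁻¹ σⁱ`, so
`T_λ F = (1 + λt)⁻¹ · F(σ)`. Substituting `σ` is a ring homomorphism; it sends `t` to `σ` and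
`(1 + xt)⁻¹` to `(1 + λt) (1 + (x + λ)t)⁻¹`, because `(1 + xσ)(1 + λt) = 1 + (x + λ)t`. The factors
`σʳ (1 + λt)ʳ = tʳ` then collapse. -/

namespace PowerSeries

variable {R : Type*} [CommRing R]

theorem coeff_mul_subst_eq_sum_range {b : R⟦X⟧} (hb : HasSubst b) (h F : R⟦X⟧) {m N : ℕ}
    (hN : ∀ d, N ≤ d → ∀ k ≤ m, coeff k (b ^ d) = 0) :
    coeff m (h * F.subst b) = ∑ d ∈ range N, coeff d F * coeff m (h * b ^ d) := by
  have coeff_subst_eq_sum : ∀ k ≤ m,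
      coeff k (F.subst b) = ∑ d ∈ range N, coeff d F * coeff k (b ^ d) := by
    intro k hk
    rw [coeff_subst' hb, finsum_eq_sum_of_support_subset _ (s := range N)]
    · simp only [smul_eq_mul]
    · intro d hd
      by_contra hdN
      simp only [coe_range, Set.mem_Iio, not_lt] at hdN
      simp [hN d hdN k hk] at hd
  simp only [coeff_mul, Finset.mul_sum]
  rw [Finset.sum_comm]
  refine Finset.sum_congr rfl fun p hp => ?_
  rw [coeff_subst_eq_sum p.2 (HasAntidiagonal.antidiagonal.snd_le hp), Finset.mul_sum]
  exact Finset.sum_congr rfl fun d _ => by ring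

theorem coeff_X_mul_pow_of_lt (g : R⟦X⟧) {k d : ℕ} (h : k < d) : coeff k ((X * g) ^ d) = 0 := by
  rw [mul_pow, coeff_X_pow_mul', if_neg (by omega)]

end PowerSeries

section

variable {R : Type*} [CommRing R]

theorem oneAdd_mul_invOneAdd (a : R) : oneAdd a * invOneAdd a = 1 :=
  mul_invOfUnit _ _ (by simp [oneAdd])

theorem hasSubst_X_mul_invOneAdd (l : R) : HasSubst (X * invOneAdd l) :=
  HasSubst.X'.mul_left

theorem T_eq_mul_subst (l : R) (F : R⟦X⟧) :
    T l F = invOneAdd l * F.subst (X * invOneAdd l) := by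
  ext m
  rw [coeff_mul_subst_eq_sum_range (hasSubst_X_mul_invOneAdd l) _ _ (N := m + 1)
    (fun d hd k hk => coeff_X_mul_pow_of_lt _ (by omega)), T, coeff_mk]
  refine Finset.sum_congr rfl fun i hi => ?_
  rw [mem_range] at hi
  rw [mul_pow, mul_left_comm, coeff_X_pow_mul', if_pos (by omega), ← pow_succ']

theorem subst_oneAdd (l a : R) :
    (oneAdd a).subst (X * invOneAdd l) = 1 + C a * (X * invOneAdd l) := by
  rw [oneAdd, ← smul_eq_C_mul, ← smul_eq_C_mul, ← coe_substAlgHom (hasSubst_X_mul_invOneAdd l),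
    map_add, map_one, map_smul, substAlgHom_X]

theorem subst_invOneAdd (l a : R) :
    (invOneAdd a).subst (X * invOneAdd l) = oneAdd l * invOneAdd (a + l) := by
  set φ := substAlgHom (R := R) (hasSubst_X_mul_invOneAdd l)
  have left_inv : φ (invOneAdd a) * φ (oneAdd a) = 1 := by
    rw [← map_mul, mul_comm, oneAdd_mul_invOneAdd, map_one]
  have right_inv : φ (oneAdd a) * (oneAdd l * invOneAdd (a + l)) = 1 := by
    rw [coe_substAlgHom, subst_oneAdd]
    calc (1 + C a * (X * invOneAdd l)) * (oneAdd l * invOneAdd (a + l))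
        = (oneAdd l + C a * X * (oneAdd l * invOneAdd l)) * invOneAdd (a + l) := by ring
      _ = oneAdd (a + l) * invOneAdd (a + l) := by
        rw [oneAdd_mul_invOneAdd, oneAdd, oneAdd, map_add]; ring
      _ = 1 := oneAdd_mul_invOneAdd _
  rw [← coe_substAlgHom (hasSubst_X_mul_invOneAdd l)]
  exact left_inv_eq_right_inv left_inv right_inv

end

/-- `T_λ(t^r ∏(1+xⱼt)⁻¹) = t^r (1+λt)⁻¹ ∏(1+(xⱼ+λ)t)⁻¹` (tensored Segre class of a
regular embedding). -/
theorem tensor_segre_regular_embedding {R : Type*} [CommRing R] (l : R) (r : ℕ)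
    (x : Fin r → R) :
    T l (PowerSeries.X ^ r * ∏ j, invOneAdd (x j)) =
      PowerSeries.X ^ r * invOneAdd l * ∏ j, invOneAdd (x j + l) := by
  rw [T_eq_mul_subst, ← coe_substAlgHom (hasSubst_X_mul_invOneAdd l), map_mul, map_pow,
    map_prod, substAlgHom_X]
  simp_rw [coe_substAlgHom, subst_invOneAdd]
  rw [prod_mul_distrib, prod_const, card_univ, Fintype.card_fin]
  have unit_pow : (invOneAdd l * oneAdd l) ^ r = 1 := by
    rw [mul_comm, oneAdd_mul_invOneAdd, one_pow]
  linear_combination (X ^ r * invOneAdd l * ∏ j, invOneAdd (x j + l)) * unit_pow
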